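/- Let Λ be a self-adjoint operator on a real Hilbert space with spectrum in [−1,1], V a vector, μ_V its spectral measure, and ψ_ε = (1 + ε − Λ)^{−1}V for ε > 0. If ∫_{[−1,1]}(1−λ)^{−1}dμ_V(λ) < ∞, then lim_{ε₁, ε₂ ↓ 0} ⟨ψ_{ε₁} − ψ_{ε₂}, (1 − Λ)(ψ_{ε₁} − ψ_{ε₂})⟩ = 0. -/

import Mathlib

/-!
The Neumann partial sums `pₙ` of `(a - X)⁻¹` satisfy `(a - Λ) pₙ(Λ) V = V - (a⁻¹Λ)ⁿ V`, and
`‖q(Λ) V‖² = ∫ q² dμ` for every polynomial `q`, so `pₙ(Λ) V → (a - Λ)⁻¹ V` for `a > 1`.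
Since `pₙ → (a - x)⁻¹` boundedly on `[-1, 1]`, dominated convergence carries the moment identity
over to the resolvents:
`⟪ψ ε₁ - ψ ε₂, (1 - Λ)(ψ ε₁ - ψ ε₂)⟫ = ∫ (1 - x) ((1 + ε₁ - x)⁻¹ - (1 + ε₂ - x)⁻¹)² dμ`.
The integrand is at most `(1 - x)⁻¹`, which is `μ`-integrable by hypothesis, and tends to `0`
as `ε₁, ε₂ ↓ 0`; a second application of dominated convergence concludes.
-/

open MeasureTheory Filter
open scoped RealInnerProductSpace Topology

open Polynomial

noncomputable def neumannPoly (a : ℝ) (n : ℕ) : ℝ[X] :=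
  C a⁻¹ * ∑ k ∈ Finset.range n, (C a⁻¹ * X) ^ k

lemma C_sub_X_mul_neumannPoly {a : ℝ} (ha : a ≠ 0) (n : ℕ) :
    (C a - X) * neumannPoly a n = 1 - (C a⁻¹ * X) ^ n := by
  have h : C a - X = C a * (1 - C a⁻¹ * X) := by
    rw [mul_sub, mul_one, ← mul_assoc, ← C_mul, mul_inv_cancel₀ ha, C_1, one_mul]
  rw [h, neumannPoly, mul_mul_mul_comm, ← C_mul, mul_inv_cancel₀ ha, C_1, one_mul,
    mul_neg_geom_sum]

lemma eval_neumannPoly {a x : ℝ} (ha : a ≠ 0) (hx : x ≠ a) (n : ℕ) :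
    (neumannPoly a n).eval x = (1 - (a⁻¹ * x) ^ n) / (a - x) := by
  have h := congrArg (eval x) (C_sub_X_mul_neumannPoly ha n)
  simp only [eval_mul, eval_sub, eval_C, eval_X, eval_one, eval_pow] at h
  rw [eq_div_iff (sub_ne_zero.mpr hx.symm), mul_comm, h]

lemma abs_inv_mul_lt_one {a x : ℝ} (ha : 1 < a) (hx : |x| ≤ 1) : |a⁻¹ * x| < 1 := by
  rw [abs_mul, abs_inv, abs_of_pos (by linarith), inv_mul_lt_one₀ (by linarith)]
  linarith

lemma abs_eval_neumannPoly_le {a x : ℝ} (ha : 1 < a) (hx : |x| ≤ 1) (n : ℕ) :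
    |(neumannPoly a n).eval x| ≤ 2 / (a - 1) := by
  have hxa : x < a := (le_of_abs_le hx).trans_lt ha
  have hpow : |(a⁻¹ * x) ^ n| ≤ 1 := by
    rw [abs_pow]
    exact pow_le_one₀ (abs_nonneg _) (abs_inv_mul_lt_one ha hx).le
  have hnum : |1 - (a⁻¹ * x) ^ n| ≤ 2 := by
    linarith [abs_sub (1 : ℝ) ((a⁻¹ * x) ^ n), abs_one (α := ℝ)]
  have hden : a - 1 ≤ a - x := by linarith [le_of_abs_le hx]
  rw [eval_neumannPoly (by positivity) hxa.ne, abs_div, abs_of_pos (sub_pos.mpr hxa)]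
  gcongr

lemma tendsto_eval_neumannPoly {a x : ℝ} (ha : 1 < a) (hx : |x| ≤ 1) :
    Tendsto (fun n => (neumannPoly a n).eval x) atTop (𝓝 (a - x)⁻¹) := by
  have hxa : x ≠ a := ((le_of_abs_le hx).trans_lt ha).ne
  have h := ((tendsto_pow_atTop_nhds_zero_of_abs_lt_one
    (abs_inv_mul_lt_one ha hx)).const_sub 1).div_const (a - x)
  rw [sub_zero, one_div] at h
  exact h.congr fun n => (eval_neumannPoly (by positivity) hxa n).symm

lemma ContinuousLinearMap.tendsto_of_isUnit_of_tendsto_apply {R M : Type*} [Semiring R]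
    [TopologicalSpace M] [AddCommMonoid M] [Module R M] {T : M →L[R] M} (hT : IsUnit T)
    {ι : Type*} {l : Filter ι} {x : ι → M} {y : M}
    (h : Tendsto (fun i => T (x i)) l (𝓝 (T y))) : Tendsto x l (𝓝 y) := by
  obtain ⟨u, rfl⟩ := hT
  exact (ContinuousLinearEquiv.unitsEquiv R M u).toHomeomorph.isInducing.tendsto_nhds_iff.mpr h

lemma tendsto_integral_eval_mul_eval {μ : Measure ℝ} [IsFiniteMeasure μ] {p q : ℕ → ℝ[X]}
    {f g : ℝ → ℝ} {C D : ℝ}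
    (hp : ∀ᵐ x ∂μ, Tendsto (fun n => (p n).eval x) atTop (𝓝 (f x)))
    (hq : ∀ᵐ x ∂μ, Tendsto (fun n => (q n).eval x) atTop (𝓝 (g x)))
    (hpC : ∀ n, ∀ᵐ x ∂μ, |(p n).eval x| ≤ C) (hqD : ∀ n, ∀ᵐ x ∂μ, |(q n).eval x| ≤ D) :
    Tendsto (fun n => ∫ x, (p n).eval x * (q n).eval x ∂μ) atTop
      (𝓝 (∫ x, f x * g x ∂μ)) := by
  refine tendsto_integral_of_dominated_convergence (fun _ => C * D)
    (fun n => ((p n).continuous.mul (q n).continuous).aestronglyMeasurable)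
    (integrable_const _) (fun n => ?_) ?_
  · filter_upwards [hpC n, hqD n] with x hpx hqx
    rw [Real.norm_eq_abs, abs_mul]
    exact mul_le_mul hpx hqx (abs_nonneg _) ((abs_nonneg _).trans hpx)
  · filter_upwards [hp, hq] with x hpx hqx
    exact hpx.mul hqx

lemma IsSelfAdjoint.aeval {A : Type*} [Ring A] [StarRing A] [Algebra ℝ A] [StarModule ℝ A]
    {a : A} (ha : IsSelfAdjoint a) (p : ℝ[X]) : IsSelfAdjoint (aeval a p) := by
  induction p using Polynomial.induction_on' with
  | add p q hp hq => rw [map_add]; exact hp.add hq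
  | monomial n c =>
    rw [aeval_monomial, ← Algebra.smul_def]
    exact (IsSelfAdjoint.all c).smul (ha.pow n)

section SpectralMeasure

variable {H : Type*} [NormedAddCommGroup H] [InnerProductSpace ℝ H] [CompleteSpace H]
  {Λ : H →L[ℝ] H} {V : H} {μ : Measure ℝ}

lemma inner_aeval_apply_eq_integral (hΛ : IsSelfAdjoint Λ)
    (hμ : ∀ p : ℝ[X], ⟪V, aeval Λ p V⟫ = ∫ x, p.eval x ∂μ) (p q : ℝ[X]) :
    ⟪aeval Λ p V, aeval Λ q V⟫ = ∫ x, p.eval x * q.eval x ∂μ := by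
  have hsymm := (hΛ.aeval p).isSymmetric V (aeval Λ q V)
  simp only [ContinuousLinearMap.coe_coe] at hsymm
  rw [hsymm, ← mul_apply_eq_comp, ← map_mul, hμ]
  simp only [eval_mul]

variable [IsFiniteMeasure μ]

lemma inner_eq_integral_of_tendsto (hΛ : IsSelfAdjoint Λ)
    (hμ : ∀ p : ℝ[X], ⟪V, aeval Λ p V⟫ = ∫ x, p.eval x ∂μ)
    {p q : ℕ → ℝ[X]} {v w : H} {f g : ℝ → ℝ} {C D : ℝ}
    (hv : Tendsto (fun n => aeval Λ (p n) V) atTop (𝓝 v))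
    (hw : Tendsto (fun n => aeval Λ (q n) V) atTop (𝓝 w))
    (hp : ∀ᵐ x ∂μ, Tendsto (fun n => (p n).eval x) atTop (𝓝 (f x)))
    (hq : ∀ᵐ x ∂μ, Tendsto (fun n => (q n).eval x) atTop (𝓝 (g x)))
    (hpC : ∀ n, ∀ᵐ x ∂μ, |(p n).eval x| ≤ C) (hqD : ∀ n, ∀ᵐ x ∂μ, |(q n).eval x| ≤ D) :
    ⟪v, w⟫ = ∫ x, f x * g x ∂μ :=
  tendsto_nhds_unique (hv.inner hw) <| (tendsto_integral_eval_mul_eval hp hq hpC hqD).congr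
    fun n => (inner_aeval_apply_eq_integral hΛ hμ (p n) (q n)).symm

lemma tendsto_aeval_apply_zero (hΛ : IsSelfAdjoint Λ)
    (hμ : ∀ p : ℝ[X], ⟪V, aeval Λ p V⟫ = ∫ x, p.eval x ∂μ) {p : ℕ → ℝ[X]} {C : ℝ}
    (hp : ∀ᵐ x ∂μ, Tendsto (fun n => (p n).eval x) atTop (𝓝 0))
    (hpC : ∀ n, ∀ᵐ x ∂μ, |(p n).eval x| ≤ C) :
    Tendsto (fun n => aeval Λ (p n) V) atTop (𝓝 0) := by
  rw [tendsto_zero_iff_norm_tendsto_zero]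
  have h := (tendsto_integral_eval_mul_eval hp hp hpC hpC).sqrt
  simp only [mul_zero, integral_zero, Real.sqrt_zero] at h
  refine h.congr fun n => ?_
  rw [← inner_aeval_apply_eq_integral hΛ hμ, ← norm_eq_sqrt_real_inner]

lemma tendsto_aeval_neumannPoly_apply (hΛ : IsSelfAdjoint Λ)
    (hμ : ∀ p : ℝ[X], ⟪V, aeval Λ p V⟫ = ∫ x, p.eval x ∂μ) (hsupp : ∀ᵐ x ∂μ, |x| ≤ 1)
    {a : ℝ} (ha : 1 < a) (hunit : IsUnit (a • (1 : H →L[ℝ] H) - Λ)) {ψ : H}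
    (hψ : (a • (1 : H →L[ℝ] H) - Λ) ψ = V) :
    Tendsto (fun n => aeval Λ (neumannPoly a n) V) atTop (𝓝 ψ) := by
  refine ContinuousLinearMap.tendsto_of_isUnit_of_tendsto_apply hunit ?_
  have happly (n : ℕ) : (a • (1 : H →L[ℝ] H) - Λ) (aeval Λ (neumannPoly a n) V)
      = V - aeval Λ ((C a⁻¹ * X) ^ n) V := by
    have h := congrArg (fun p => aeval Λ p V) (C_sub_X_mul_neumannPoly (by positivity) n)
    simpa [Algebra.algebraMap_eq_smul_one, mul_apply_eq_comp] using h
  have hpow : Tendsto (fun n => aeval Λ ((C a⁻¹ * X) ^ n) V) atTop (𝓝 0) := by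
    refine tendsto_aeval_apply_zero hΛ hμ (C := 1) ?_ fun n => ?_ <;>
      filter_upwards [hsupp] with x hx <;> simp only [eval_pow, eval_mul, eval_C, eval_X]
    · exact tendsto_pow_atTop_nhds_zero_of_abs_lt_one (abs_inv_mul_lt_one ha hx)
    · rw [abs_pow]
      exact pow_le_one₀ (abs_nonneg _) (abs_inv_mul_lt_one ha hx).le
  rw [hψ]
  simpa [happly] using hpow.const_sub V

lemma inner_sub_one_sub_apply_eq_integral (hΛ : IsSelfAdjoint Λ)
    (hμ : ∀ p : ℝ[X], ⟪V, aeval Λ p V⟫ = ∫ x, p.eval x ∂μ) (hsupp : ∀ᵐ x ∂μ, |x| ≤ 1)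
    {a b : ℝ} (ha : 1 < a) (hb : 1 < b) {ψa ψb : H}
    (hψa : Tendsto (fun n => aeval Λ (neumannPoly a n) V) atTop (𝓝 ψa))
    (hψb : Tendsto (fun n => aeval Λ (neumannPoly b n) V) atTop (𝓝 ψb)) :
    ⟪ψa - ψb, (1 - Λ) (ψa - ψb)⟫ = ∫ x, (1 - x) * ((a - x)⁻¹ - (b - x)⁻¹) ^ 2 ∂μ := by
  set p : ℕ → ℝ[X] := fun n => neumannPoly a n - neumannPoly b n
  have hv : Tendsto (fun n => aeval Λ (p n) V) atTop (𝓝 (ψa - ψb)) := by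
    simpa [p] using hψa.sub hψb
  have hw : Tendsto (fun n => aeval Λ ((1 - X) * p n) V) atTop (𝓝 ((1 - Λ) (ψa - ψb))) := by
    refine (((1 - Λ).continuous.tendsto _).comp hv).congr fun n => ?_
    simp only [Function.comp_apply, map_mul, mul_apply_eq_comp, map_sub, map_one, aeval_X]
  have hp : ∀ᵐ x ∂μ, Tendsto (fun n => (p n).eval x) atTop (𝓝 ((a - x)⁻¹ - (b - x)⁻¹)) := by
    filter_upwards [hsupp] with x hx
    simpa [p] using (tendsto_eval_neumannPoly ha hx).sub (tendsto_eval_neumannPoly hb hx)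
  have hpC (n : ℕ) : ∀ᵐ x ∂μ, |(p n).eval x| ≤ 2 / (a - 1) + 2 / (b - 1) := by
    filter_upwards [hsupp] with x hx
    simp only [p, eval_sub]
    exact (abs_sub _ _).trans
      (add_le_add (abs_eval_neumannPoly_le ha hx n) (abs_eval_neumannPoly_le hb hx n))
  have hq : ∀ᵐ x ∂μ, Tendsto (fun n => ((1 - X) * p n).eval x) atTop
      (𝓝 ((1 - x) * ((a - x)⁻¹ - (b - x)⁻¹))) := by
    filter_upwards [hp] with x hx
    simpa using hx.const_mul (1 - x)
  have hqD (n : ℕ) : ∀ᵐ x ∂μ, |((1 - X) * p n).eval x| ≤ 2 * (2 / (a - 1) + 2 / (b - 1)) := by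
    filter_upwards [hsupp, hpC n] with x hx hpx
    rw [eval_mul, abs_mul]
    refine mul_le_mul ?_ hpx (abs_nonneg _) zero_le_two
    simpa using (abs_sub (1 : ℝ) x).trans (by linarith [abs_one (α := ℝ)])
  rw [inner_eq_integral_of_tendsto hΛ hμ hv hw hp hq hpC hqD]
  congr 1 with x
  ring

end SpectralMeasure

lemma ae_lt_one_of_lintegral_ne_top {μ : Measure ℝ}
    (hfin : ∫⁻ x, (ENNReal.ofReal (1 - x))⁻¹ ∂μ ≠ ⊤) : ∀ᵐ x ∂μ, x < 1 := by
  filter_upwards [ae_lt_top (by fun_prop) hfin] with x hx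
  simpa [ENNReal.inv_lt_top] using hx

lemma integrable_inv_one_sub_of_lintegral_ne_top {μ : Measure ℝ}
    (hfin : ∫⁻ x, (ENNReal.ofReal (1 - x))⁻¹ ∂μ ≠ ⊤) :
    Integrable (fun x => (1 - x)⁻¹) μ := by
  refine (integrable_toReal_of_lintegral_ne_top (by fun_prop) hfin).congr ?_
  filter_upwards [ae_lt_one_of_lintegral_ne_top hfin] with x hx
  rw [ENNReal.toReal_inv, ENNReal.toReal_ofReal (by linarith)]

lemma one_sub_mul_inv_sub_inv_sq_le {x a b : ℝ} (hx : x < 1) (ha : 0 ≤ a) (hb : 0 ≤ b) :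
    (1 - x) * ((1 + a - x)⁻¹ - (1 + b - x)⁻¹) ^ 2 ≤ (1 - x)⁻¹ := by
  have ht : 0 < 1 - x := by linarith
  have hu : (1 + a - x)⁻¹ ≤ (1 - x)⁻¹ := inv_anti₀ ht (by linarith)
  have hv : (1 + b - x)⁻¹ ≤ (1 - x)⁻¹ := inv_anti₀ ht (by linarith)
  have hu0 : 0 < (1 + a - x)⁻¹ := inv_pos.mpr (by linarith)
  have hv0 : 0 < (1 + b - x)⁻¹ := inv_pos.mpr (by linarith)
  calc (1 - x) * ((1 + a - x)⁻¹ - (1 + b - x)⁻¹) ^ 2 ≤ (1 - x) * ((1 - x)⁻¹) ^ 2 :=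
        mul_le_mul_of_nonneg_left (sq_le_sq' (by linarith) (by linarith)) ht.le
    _ = (1 - x)⁻¹ := by field_simp

lemma tendsto_integral_one_sub_mul_inv_sub_inv_sq {μ : Measure ℝ}
    (hfin : ∫⁻ x, (ENNReal.ofReal (1 - x))⁻¹ ∂μ ≠ ⊤) :
    Tendsto (fun e : ℝ × ℝ => ∫ x, (1 - x) * ((1 + e.1 - x)⁻¹ - (1 + e.2 - x)⁻¹) ^ 2 ∂μ)
      ((𝓝[>] 0) ×ˢ (𝓝[>] 0)) (𝓝 0) := by
  have hle : (𝓝[>] (0 : ℝ)) ×ˢ (𝓝[>] (0 : ℝ)) ≤ 𝓝 0 := by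
    rw [← Prod.mk_zero_zero, nhds_prod_eq]
    exact Filter.prod_mono nhdsWithin_le_nhds nhdsWithin_le_nhds
  set F : ℝ × ℝ → ℝ → ℝ := fun e x => (1 - x) * ((1 + e.1 - x)⁻¹ - (1 + e.2 - x)⁻¹) ^ 2
  have hlt := ae_lt_one_of_lintegral_ne_top hfin
  have hmeas : ∀ᶠ e in (𝓝[>] 0) ×ˢ (𝓝[>] 0), AEStronglyMeasurable (F e) μ :=
    Eventually.of_forall fun e => by fun_prop
  have hbound : ∀ᶠ e in (𝓝[>] 0) ×ˢ (𝓝[>] 0), ∀ᵐ x ∂μ, ‖F e x‖ ≤ (1 - x)⁻¹ := by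
    filter_upwards [prod_mem_prod self_mem_nhdsWithin self_mem_nhdsWithin] with e he
    filter_upwards [hlt] with x hx
    rw [Real.norm_of_nonneg (mul_nonneg (by linarith) (sq_nonneg _))]
    exact one_sub_mul_inv_sub_inv_sq_le hx (le_of_lt he.1) (le_of_lt he.2)
  have hlim : ∀ᵐ x ∂μ, Tendsto (fun e => F e x) ((𝓝[>] 0) ×ˢ (𝓝[>] 0)) (𝓝 0) := by
    filter_upwards [hlt] with x hx
    have hcont : ContinuousAt (fun e => F e x) 0 := by
      fun_prop (disch := simp; linarith)
    simpa [F] using hcont.tendsto.mono_left hle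
  have h := tendsto_integral_filter_of_dominated_convergence _ hmeas hbound
    (integrable_inv_one_sub_of_lintegral_ne_top hfin) hlim
  rwa [integral_zero] at h

/-- Cauchy property of the resolvent approximations in the `(1-Λ)`-form:
if the spectral measure `μ` of `Λ` at `V` satisfies `∫ (1-λ)⁻¹ dμ < ∞` then
`⟨ψ_{ε₁} - ψ_{ε₂}, (1-Λ)(ψ_{ε₁} - ψ_{ε₂})⟩ → 0` as `ε₁, ε₂ ↓ 0`. -/
theorem resolvent_diff_dirichlet_form_tendsto_zero
    {H : Type*} [NormedAddCommGroup H] [InnerProductSpace ℝ H] [CompleteSpace H]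
    (Λ : H →L[ℝ] H) (hΛ : IsSelfAdjoint Λ)
    (hspec : spectrum ℝ Λ ⊆ Set.Icc (-1 : ℝ) 1)
    (V : H) (μ : Measure ℝ) [IsFiniteMeasure μ]
    (hsupp : μ (Set.Icc (-1 : ℝ) 1)ᶜ = 0)
    (hμ : ∀ p : Polynomial ℝ,
      ⟪V, Polynomial.aeval Λ p V⟫ = ∫ x, p.eval x ∂μ)
    (ψ : ℝ → H)
    (hψ : ∀ ε > (0 : ℝ), ((1 + ε) • (1 : H →L[ℝ] H) - Λ) (ψ ε) = V)
    (hfin : ∫⁻ l, (ENNReal.ofReal (1 - l))⁻¹ ∂μ < ⊤) :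
    Tendsto (fun p : ℝ × ℝ => ⟪ψ p.1 - ψ p.2, ((1 : H →L[ℝ] H) - Λ) (ψ p.1 - ψ p.2)⟫)
      ((𝓝[>] 0) ×ˢ (𝓝[>] 0)) (𝓝 0) := by
  have habs : ∀ᵐ x ∂μ, |x| ≤ 1 := by
    filter_upwards [mem_ae_iff.mpr hsupp] with x hx using abs_le.mpr hx
  have hres (ε : ℝ) (hε : 0 < ε) :
      Tendsto (fun n => aeval Λ (neumannPoly (1 + ε) n) V) atTop (𝓝 (ψ ε)) := by
    have hunit : IsUnit ((1 + ε) • (1 : H →L[ℝ] H) - Λ) := by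
      rw [← Algebra.algebraMap_eq_smul_one, ← spectrum.notMem_iff]
      exact fun h => by linarith [(hspec h).2]
    exact tendsto_aeval_neumannPoly_apply hΛ hμ habs (by linarith) hunit (hψ ε hε)
  refine (tendsto_integral_one_sub_mul_inv_sub_inv_sq hfin.ne).congr' ?_
  filter_upwards [prod_mem_prod self_mem_nhdsWithin self_mem_nhdsWithin] with e ⟨he₁, he₂⟩
  rw [Set.mem_Ioi] at he₁ he₂
  exact (inner_sub_one_sub_apply_eq_integral hΛ hμ habs (by linarith) (by linarith)
    (hres _ he₁) (hres _ he₂)).symm
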